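/- arXiv:1503.06906 — 2 statements merged into one kernel-verified Lean document; each statement's English description precedes it below -/
import Mathlib

section
/- For any real ε > 0, if k(n) = ε·log n, then the sequence of positive integers m that are not divisible by p^⌈k(m)⌉ for any prime p has bounded gaps: for all sufficiently large x, the interval [x, x + e^{1/ε} + 2) contains at least one such integer. -/
/-!
A prime `p` with `p ^ ⌈ε log m⌉ ∣ m` satisfies `p ^ (ε log m) ≤ m`, hence `p ≤ e^{1/ε}`: only the
primes `p ≤ M := ⌊e^{1/ε}⌋` can spoil `k`-freeness. Once `x` is so large that `2 ^ ⌈ε log x⌉ > M`,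
each `p ∈ [2, M]` has `p ^ ⌈ε log x⌉` dividing at most one of the `M + 1` integers in `[x, x + M]`, so
by pigeonhole one of these integers is `k`-free.
-/

open Real Finset Filter

theorem mul_log_le_one_of_pow_ceil_le {ε m p : ℝ} (hm : 1 < m) (hp : 1 ≤ p)
    (h : p ^ ⌈ε * log m⌉₊ ≤ m) : ε * log p ≤ 1 := by
  have hlog_p : 0 ≤ log p := log_nonneg hp
  have hlog_m : 0 < log m := log_pos hm
  have hk : ⌈ε * log m⌉₊ * log p ≤ log m := by
    simpa only [log_pow] using log_le_log (by positivity) h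
  have : ε * log p * log m ≤ 1 * log m := by
    nlinarith [mul_le_mul_of_nonneg_right (Nat.le_ceil (ε * log m)) hlog_p]
  exact le_of_mul_le_mul_right this hlog_m

theorem le_floor_exp_inv_of_pow_ceil_dvd {ε : ℝ} (hε : 0 < ε) {m p : ℕ} (hm : 1 < m) (hp : 0 < p)
    (h : p ^ ⌈ε * log m⌉₊ ∣ m) : p ≤ ⌊exp (1 / ε)⌋₊ := by
  have hpm : ((p : ℝ)) ^ ⌈ε * log m⌉₊ ≤ m := by exact_mod_cast Nat.le_of_dvd (by omega) h
  have hεp := mul_log_le_one_of_pow_ceil_le (by exact_mod_cast hm) (by exact_mod_cast hp) hpm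
  refine Nat.le_floor ?_
  rw [← log_le_iff_le_exp (by exact_mod_cast hp), le_div_iff₀ hε]
  linarith

theorem Nat.eq_of_dvd_of_mem_Icc {d x L a b : ℕ} (hL : L < d) (ha : a ∈ Icc x (x + L))
    (hb : b ∈ Icc x (x + L)) (hda : d ∣ a) (hdb : d ∣ b) : a = b := by
  have hab : a ≡ b [MOD d] := (Nat.modEq_zero_iff_dvd.2 hda).trans (Nat.modEq_zero_iff_dvd.2 hdb).symm
  refine hab.eq_of_abs_lt (abs_sub_lt_iff.2 ⟨?_, ?_⟩) <;> rw [mem_Icc] at ha hb <;> omega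

theorem Nat.exists_mem_Icc_forall_not_pow_dvd (x L M K : ℕ) (hM : M ≤ L + 1) (hK : L < 2 ^ K) :
    ∃ m ∈ Icc x (x + L), ∀ p ∈ Icc 2 M, ¬ p ^ K ∣ m := by
  by_contra! hcover
  choose! f hf_mem hf_dvd using hcover
  have hcard : #(Icc 2 M) < #(Icc x (x + L)) := by simp only [Nat.card_Icc]; omega
  obtain ⟨a, ha, b, hb, hne, hfab⟩ := exists_ne_map_eq_of_card_lt_of_maps_to hcard hf_mem
  have hL : L < f b ^ K := hK.trans_le (Nat.pow_le_pow_left (mem_Icc.1 (hf_mem b hb)).1 K)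
  exact hne (Nat.eq_of_dvd_of_mem_Icc hL ha hb (hfab ▸ hf_dvd a ha) (hf_dvd b hb))

theorem kfree_bounded_gaps (ε : ℝ) (hε : 0 < ε) :
    ∃ X : ℕ, ∀ x : ℕ, X ≤ x →
      ∃ m : ℕ, 0 < m ∧ x ≤ m ∧ (m : ℝ) < x + Real.exp (1 / ε) + 2 ∧
        ¬ ∃ p : ℕ, p.Prime ∧ p ^ ⌈ε * Real.log m⌉₊ ∣ m := by
  set M := ⌊exp (1 / ε)⌋₊
  have hlarge : ∀ᶠ x : ℕ in atTop, 2 ≤ x ∧ M ≤ ⌈ε * log x⌉₊ :=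
    (eventually_ge_atTop 2).and <| tendsto_nat_ceil_atTop.comp
      ((tendsto_log_atTop.comp tendsto_natCast_atTop_atTop).const_mul_atTop hε) |>.eventually_ge_atTop M
  obtain ⟨X, hX⟩ := eventually_atTop.1 hlarge
  refine ⟨X, fun x hx => ?_⟩
  obtain ⟨hx2, hMK⟩ := hX x hx
  obtain ⟨m, hm, hfree⟩ := Nat.exists_mem_Icc_forall_not_pow_dvd x M M ⌈ε * log x⌉₊ (by omega)
    (Nat.lt_two_pow_self.trans_le (Nat.pow_le_pow_right two_pos hMK))
  rw [mem_Icc] at hm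
  refine ⟨m, by omega, hm.1, ?_, ?_⟩
  · have hmx : (m : ℝ) ≤ x + M := by exact_mod_cast hm.2
    linarith [Nat.floor_le (exp_pos (1 / ε)).le]
  · rintro ⟨p, hp, hdvd⟩
    have hpM := le_floor_exp_inv_of_pow_ceil_dvd hε (by omega) hp.pos hdvd
    have hlog : ε * log x ≤ ε * log m := by gcongr; exact_mod_cast hm.1
    exact hfree p (mem_Icc.2 ⟨hp.two_le, hpM⟩) ((pow_dvd_pow p (Nat.ceil_mono hlog)).trans hdvd)
end

section
/- Let n ≥ 2 and h ≥ 2 be integers, and let i ≥ 2. Suppose n is not divisible by p^i for any prime p ≤ h. Then the number of positive integers b with b^i ∣ n is at most 2^{log n/(i·log h)}. -/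
/-!
The `b` with `b ^ i ∣ n` are exactly the divisors of `m = Nat.floorRoot i n`, and a number has at
most `2 ^ Ω m` divisors. A prime factor `p` of `m` has `p ^ i ∣ n`, so `p > h`; hence
`h ^ (i * Ω m) ≤ m ^ i ≤ n`, that is `Ω m ≤ log n / (i * log h)`.
-/

open Finset
open scoped ArithmeticFunction.Omega

namespace Nat

theorem card_divisors_le_two_pow_cardFactors (m : ℕ) : #m.divisors ≤ 2 ^ Ω m := by
  rcases eq_or_ne m 0 with rfl | hm
  · simp
  rw [card_divisors hm, ArithmeticFunction.cardFactors_eq_sum_factorization, Finsupp.sum,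
    support_factorization, ← prod_pow_eq_pow_sum]
  exact prod_le_prod' fun p _ => Nat.lt_two_pow_self

theorem pow_cardFactors_le {h m : ℕ} (hm : m ≠ 0) (hle : ∀ p ∈ m.primeFactors, h ≤ p) :
    h ^ Ω m ≤ m := by
  rw [ArithmeticFunction.cardFactors_apply]
  conv_rhs => rw [← prod_primeFactorsList hm]
  exact List.pow_card_le_prod _ _ fun p hp => hle p (mem_primeFactors_iff_mem_primeFactorsList.2 hp)

theorem card_pow_dvd_eq_card_divisors_floorRoot {i n : ℕ} (hi : i ≠ 0) (hn : n ≠ 0) :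
    Nat.card {b : ℕ // b ^ i ∣ n} = #(floorRoot i n).divisors := by
  rw [← Nat.card_eq_finsetCard]
  exact Nat.card_congr <| Equiv.subtypeEquivRight fun b => by
    rw [mem_divisors, pow_dvd_iff_dvd_floorRoot]
    simp [hi, hn]

theorem lt_of_mem_primeFactors_floorRoot {i n h : ℕ}
    (hfree : ∀ p : ℕ, p.Prime → p ≤ h → ¬ p ^ i ∣ n) {p : ℕ}
    (hp : p ∈ (floorRoot i n).primeFactors) : h < p := by
  by_contra! hph
  exact hfree p (prime_of_mem_primeFactors hp) hph
    (pow_dvd_iff_dvd_floorRoot.2 (dvd_of_mem_primeFactors hp))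

end Nat

open Nat

theorem natCast_le_log_div_of_pow_le {h n i k : ℕ} (hh : 1 < h) (hi : 0 < i)
    (hpow : h ^ (i * k) ≤ n) : (k : ℝ) ≤ Real.log n / (i * Real.log h) := by
  have hlogh : 0 < Real.log h := Real.log_pos (by exact_mod_cast hh)
  have hn : (0 : ℝ) < n := by exact_mod_cast (Nat.pow_pos (by omega : 0 < h)).trans_le hpow
  rw [le_div_iff₀ (by positivity)]
  calc (k : ℝ) * (i * Real.log h) = Real.log ((h : ℝ) ^ (i * k)) := by
        rw [Real.log_pow]; push_cast; ring
    _ ≤ Real.log n := Real.log_le_log (by positivity) (by exact_mod_cast hpow)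

theorem count_power_divisors_le (n h i : ℕ) (hn : 2 ≤ n) (hh : 2 ≤ h) (hi : 2 ≤ i)
    (hfree : ∀ p : ℕ, p.Prime → p ≤ h → ¬ p ^ i ∣ n) :
    (Nat.card {b : ℕ // b ^ i ∣ n} : ℝ) ≤
      2 ^ (Real.log n / (i * Real.log h)) := by
  set m := floorRoot i n
  have hm : m ≠ 0 := floorRoot_ne_zero.2 ⟨by omega, by omega⟩
  have hpow : h ^ (i * Ω m) ≤ n := calc
    h ^ (i * Ω m) = (h ^ Ω m) ^ i := by rw [mul_comm, pow_mul]
    _ ≤ m ^ i := Nat.pow_le_pow_left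
        (pow_cardFactors_le hm fun p hp => (lt_of_mem_primeFactors_floorRoot hfree hp).le) i
    _ ≤ n := Nat.le_of_dvd (by omega) floorRoot_pow_dvd
  rw [card_pow_dvd_eq_card_divisors_floorRoot (by omega) (by omega)]
  calc (#m.divisors : ℝ) ≤ 2 ^ Ω m := by exact_mod_cast card_divisors_le_two_pow_cardFactors m
    _ = 2 ^ (Ω m : ℝ) := (Real.rpow_natCast 2 _).symm
    _ ≤ 2 ^ (Real.log n / (i * Real.log h)) := Real.rpow_le_rpow_of_exponent_le one_le_two
        (natCast_le_log_div_of_pow_le (by omega) (by omega) hpow)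
end
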